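/- Let m be an even positive integer. The following are equivalent: (i) there exists a 2m×2m (0,1)-matrix A with A Aᵀ = Aᵀ A = m·I_{2m} + (m/2)·(J_{2m} − I_m ⊗ J_2) and A(I_m⊗J_2) = (I_m⊗J_2)A = J_{2m}; (ii) there exists a Hadamard matrix of order m. Explicitly, writing A = A₁⊗I₂ + A₂⊗(J₂−I₂) with A₁ + A₂ = J_m, the matrix H := A₁ − A₂ is a Hadamard matrix of order m, and conversely. -/
import Mathlib


open Matrix

noncomputable section

/-- The all-ones matrix `J_{2m}` (indexed by `Fin m × Fin 2`). -/
def Jmat (m : ℕ) : Matrix (Fin m × Fin 2) (Fin m × Fin 2) ℝ :=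
  Matrix.of fun _ _ => 1

/-- The block-diagonal matrix `I_m ⊗ J_2` (indexed by `Fin m × Fin 2`). -/
def Kmat (m : ℕ) : Matrix (Fin m × Fin 2) (Fin m × Fin 2) ℝ :=
  Matrix.of fun p q => if p.1 = q.1 then 1 else 0

def blk {m : ℕ} (A1 A2 : Matrix (Fin m) (Fin m) ℝ) :
    Matrix (Fin m × Fin 2) (Fin m × Fin 2) ℝ :=
  Matrix.of fun p q => if p.2 = q.2 then A1 p.1 q.1 else A2 p.1 q.1

def Jm (m : ℕ) : Matrix (Fin m) (Fin m) ℝ := Matrix.of fun _ _ => 1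

lemma blk_mul_transpose {m : ℕ} (A1 A2 B1 B2 : Matrix (Fin m) (Fin m) ℝ) :
    blk A1 A2 * (blk B1 B2)ᵀ =
      blk (A1 * B1ᵀ + A2 * B2ᵀ) (A1 * B2ᵀ + A2 * B1ᵀ) := by
  ext ⟨i, a⟩ ⟨j, b⟩
  simp only [blk, Matrix.mul_apply, Matrix.transpose_apply, Matrix.of_apply,
    Fintype.sum_prod_type_right, Fin.sum_univ_two, Matrix.add_apply]
  fin_cases a <;> fin_cases b <;>
    simp [Finset.sum_add_distrib, mul_comm, add_comm]

lemma blk_transpose {m : ℕ} (A1 A2 : Matrix (Fin m) (Fin m) ℝ) :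
    (blk A1 A2)ᵀ = blk A1ᵀ A2ᵀ := by
  ext ⟨i, a⟩ ⟨j, b⟩
  simp only [blk, Matrix.transpose_apply, Matrix.of_apply]
  by_cases h : a = b <;> simp [h, eq_comm]

lemma blk_inj {m : ℕ} {A1 A2 B1 B2 : Matrix (Fin m) (Fin m) ℝ}
    (h : blk A1 A2 = blk B1 B2) : A1 = B1 ∧ A2 = B2 := by
  constructor <;> ext i j
  · have := congrFun (congrFun h (i, 0)) (j, 0); simpa [blk] using this
  · have := congrFun (congrFun h (i, 0)) (j, 1); simpa [blk] using this

lemma rhs_eq_blk (m : ℕ) :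
    (m : ℝ) • (1 : Matrix (Fin m × Fin 2) (Fin m × Fin 2) ℝ)
      + ((m : ℝ) / 2) • (Jmat m - Kmat m)
    = blk (((m : ℝ) / 2) • (Jm m + 1)) (((m : ℝ) / 2) • (Jm m - 1)) := by
  ext ⟨i, a⟩ ⟨j, b⟩
  simp only [blk, Jmat, Kmat, Jm, Matrix.add_apply, Matrix.sub_apply,
    Matrix.smul_apply, Matrix.one_apply, Matrix.of_apply, smul_eq_mul,
    Prod.mk.injEq]
  by_cases hij : i = j <;> by_cases hab : a = b <;>
    simp [hij, hab] <;> ring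

lemma Jm_mul_Jm_transpose (m : ℕ) :
    Jm m * (Jm m)ᵀ = (m : ℝ) • Jm m := by
  ext i j
  simp [Jm, Matrix.mul_apply]

/-- Key equivalence: the GDD equation for the block matrix holds iff
`(A1 - A2)(A1 - A2)ᵀ = m I`. -/
lemma part2 {m : ℕ} (A1 A2 : Matrix (Fin m) (Fin m) ℝ)
    (hsum : A1 + A2 = Jm m) :
    blk A1 A2 * (blk A1 A2)ᵀ =
        (m : ℝ) • (1 : Matrix (Fin m × Fin 2) (Fin m × Fin 2) ℝ)
          + ((m : ℝ) / 2) • (Jmat m - Kmat m) ↔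
      (A1 - A2) * (A1 - A2)ᵀ = (m : ℝ) • (1 : Matrix (Fin m) (Fin m) ℝ) := by
  have hSP : (A1 * A1ᵀ + A2 * A2ᵀ) + (A1 * A2ᵀ + A2 * A1ᵀ) = (m : ℝ) • Jm m := by
    have h1 : (A1 * A1ᵀ + A2 * A2ᵀ) + (A1 * A2ᵀ + A2 * A1ᵀ)
        = (A1 + A2) * (A1 + A2)ᵀ := by
      rw [Matrix.transpose_add]; noncomm_ring
    rw [h1, hsum, Jm_mul_Jm_transpose]
  have hdiff : (A1 - A2) * (A1 - A2)ᵀ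
      = (A1 * A1ᵀ + A2 * A2ᵀ) - (A1 * A2ᵀ + A2 * A1ᵀ) := by
    rw [Matrix.transpose_sub]; noncomm_ring
  rw [blk_mul_transpose, rhs_eq_blk, hdiff]
  constructor
  · intro h
    obtain ⟨h1, h2⟩ := blk_inj h
    rw [h1, h2]
    module
  · intro h
    have e1 : A1 * A1ᵀ + A2 * A2ᵀ = (2⁻¹ : ℝ) •
        (((A1 * A1ᵀ + A2 * A2ᵀ) + (A1 * A2ᵀ + A2 * A1ᵀ))
          + ((A1 * A1ᵀ + A2 * A2ᵀ) - (A1 * A2ᵀ + A2 * A1ᵀ))) := by module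
    have e2 : A1 * A2ᵀ + A2 * A1ᵀ = (2⁻¹ : ℝ) •
        (((A1 * A1ᵀ + A2 * A2ᵀ) + (A1 * A2ᵀ + A2 * A1ᵀ))
          - ((A1 * A1ᵀ + A2 * A2ᵀ) - (A1 * A2ᵀ + A2 * A1ᵀ))) := by module
    rw [hSP, h] at e1 e2
    have hSv : A1 * A1ᵀ + A2 * A2ᵀ = ((m : ℝ) / 2) • (Jm m + 1) := by
      rw [e1]; module
    have hPv : A1 * A2ᵀ + A2 * A1ᵀ = ((m : ℝ) / 2) • (Jm m - 1) := by
      rw [e2]; module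
    rw [hSv, hPv]

lemma blk_mul_K {m : ℕ} (A1 A2 : Matrix (Fin m) (Fin m) ℝ)
    (hsum : A1 + A2 = Jm m) : blk A1 A2 * Kmat m = Jmat m := by
  ext ⟨i, a⟩ ⟨j, b⟩
  have h := congrFun (congrFun hsum i) j
  simp only [Jm, Matrix.add_apply, Matrix.of_apply] at h
  simp only [blk, Kmat, Jmat, Matrix.mul_apply, Matrix.of_apply,
    Fintype.sum_prod_type_right, Fin.sum_univ_two]
  fin_cases a <;> simp [Finset.sum_ite_eq, h, add_comm]

lemma K_mul_blk {m : ℕ} (A1 A2 : Matrix (Fin m) (Fin m) ℝ)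
    (hsum : A1 + A2 = Jm m) : Kmat m * blk A1 A2 = Jmat m := by
  ext ⟨i, a⟩ ⟨j, b⟩
  have h := congrFun (congrFun hsum i) j
  simp only [Jm, Matrix.add_apply, Matrix.of_apply] at h
  simp only [blk, Kmat, Jmat, Matrix.mul_apply, Matrix.of_apply,
    Fintype.sum_prod_type_right, Fin.sum_univ_two]
  fin_cases b <;> simp [Finset.sum_ite_eq, h, add_comm] <;>
    fin_cases a <;> simp [h, add_comm]

lemma transpose_mul_self_eq {m : ℕ} (hm0 : 0 < m) (H : Matrix (Fin m) (Fin m) ℝ)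
    (h : H * Hᵀ = (m : ℝ) • (1 : Matrix (Fin m) (Fin m) ℝ)) :
    Hᵀ * H = (m : ℝ) • (1 : Matrix (Fin m) (Fin m) ℝ) := by
  have hm : (m : ℝ) ≠ 0 := Nat.cast_ne_zero.mpr hm0.ne'
  have hinv : H * ((m : ℝ)⁻¹ • Hᵀ) = 1 := by
    rw [Matrix.mul_smul, h, smul_smul, inv_mul_cancel₀ hm, one_smul]
  have hinv' : ((m : ℝ)⁻¹ • Hᵀ) * H = 1 := mul_eq_one_comm.mp hinv
  calc Hᵀ * H = (m : ℝ) • (((m : ℝ)⁻¹ • Hᵀ) * H) := by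
        rw [Matrix.smul_mul, smul_smul, mul_inv_cancel₀ hm, one_smul]
    _ = (m : ℝ) • 1 := by rw [hinv']

/-- A symmetric group divisible design with parameters `(2m, m, m, 2, 0, m/2)`
whose incidence matrix has row and column sums one in each block exists iff a
Hadamard matrix of order `m` exists; explicitly, for `A = A₁⊗I₂ + A₂⊗(J₂−I₂)`
with `A₁+A₂ = J_m`, the GDD equation holds iff `H = A₁−A₂` is Hadamard. -/
theorem stmt14 (m : ℕ) (hm : Even m) (hm0 : 0 < m) :
    ((∃ A : Matrix (Fin m × Fin 2) (Fin m × Fin 2) ℝ,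
        (∀ p q, A p q = 0 ∨ A p q = 1) ∧
        A * Aᵀ = (m : ℝ) • (1 : Matrix (Fin m × Fin 2) (Fin m × Fin 2) ℝ)
          + ((m : ℝ) / 2) • (Jmat m - Kmat m) ∧
        Aᵀ * A = (m : ℝ) • (1 : Matrix (Fin m × Fin 2) (Fin m × Fin 2) ℝ)
          + ((m : ℝ) / 2) • (Jmat m - Kmat m) ∧
        A * Kmat m = Jmat m ∧ Kmat m * A = Jmat m) ↔
      (∃ H : Matrix (Fin m) (Fin m) ℝ,
        (∀ i j, H i j = 1 ∨ H i j = -1) ∧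
        H * Hᵀ = (m : ℝ) • (1 : Matrix (Fin m) (Fin m) ℝ))) ∧
    (∀ A1 A2 : Matrix (Fin m) (Fin m) ℝ,
      (∀ i j, A1 i j = 0 ∨ A1 i j = 1) →
      (∀ i j, A2 i j = 0 ∨ A2 i j = 1) →
      A1 + A2 = Matrix.of (fun _ _ => (1 : ℝ)) →
      ((Matrix.of fun p q : Fin m × Fin 2 =>
          if p.2 = q.2 then A1 p.1 q.1 else A2 p.1 q.1) *
        (Matrix.of fun p q : Fin m × Fin 2 =>
          if p.2 = q.2 then A1 p.1 q.1 else A2 p.1 q.1)ᵀ =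
          (m : ℝ) • (1 : Matrix (Fin m × Fin 2) (Fin m × Fin 2) ℝ)
            + ((m : ℝ) / 2) • (Jmat m - Kmat m) ↔
        (A1 - A2) * (A1 - A2)ᵀ = (m : ℝ) • (1 : Matrix (Fin m) (Fin m) ℝ))) := by
  constructor
  · constructor
    · rintro ⟨A, h01, hAAT, hATA, hAK, hKA⟩
      set A1 : Matrix (Fin m) (Fin m) ℝ :=
        Matrix.of fun i j => A (i, 0) (j, 0) with hA1
      set A2 : Matrix (Fin m) (Fin m) ℝ :=
        Matrix.of fun i j => A (i, 0) (j, 1) with hA2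
      have hrow : ∀ (i : Fin m) (a : Fin 2) (j : Fin m),
          A (i, a) (j, 0) + A (i, a) (j, 1) = 1 := by
        intro i a j
        have h := congrFun (congrFun hAK (i, a)) (j, 0)
        simpa [Kmat, Jmat, Matrix.mul_apply, Fintype.sum_prod_type_right,
          Fin.sum_univ_two, Finset.sum_ite_eq, mul_ite, ite_mul] using h
      have hcol : ∀ (i j : Fin m) (b : Fin 2),
          A (i, 0) (j, b) + A (i, 1) (j, b) = 1 := by
        intro i j b
        have h := congrFun (congrFun hKA (i, 0)) (j, b)
        simpa [Kmat, Jmat, Matrix.mul_apply, Fintype.sum_prod_type_right,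
          Fin.sum_univ_two, Finset.sum_ite_eq, mul_ite, ite_mul] using h
      have hA : A = blk A1 A2 := by
        ext ⟨i, a⟩ ⟨j, b⟩
        fin_cases a <;> fin_cases b <;>
          simp only [blk, Matrix.of_apply, hA1, hA2, Fin.mk_zero, Fin.mk_one] <;>
          norm_num
        · have h1 := hcol i j 0
          have h2 := hrow i 0 j
          linarith
        · have h1 := hrow i 1 j
          have h2 := hcol i j 0
          have h3 := hrow i 0 j
          linarith
      have hsum : A1 + A2 = Jm m := by
        ext i j
        simpa [hA1, hA2, Jm] using hrow i 0 j
      refine ⟨A1 - A2, ?_, ?_⟩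
      · intro i j
        have h := hrow i 0 j
        rcases h01 (i, 0) (j, 0) with h0 | h0
        · right; simp [hA1, hA2, Matrix.sub_apply, h0]; linarith
        · left; simp [hA1, hA2, Matrix.sub_apply, h0]; linarith
      · rw [← part2 A1 A2 hsum, ← hA]
        exact hAAT
    · rintro ⟨H, hH, hHHT⟩
      set A1 : Matrix (Fin m) (Fin m) ℝ :=
        Matrix.of fun i j => (1 + H i j) / 2 with hA1
      set A2 : Matrix (Fin m) (Fin m) ℝ :=
        Matrix.of fun i j => (1 - H i j) / 2 with hA2
      have hsum : A1 + A2 = Jm m := by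
        ext i j; simp [hA1, hA2, Jm]; ring
      have hdiff : A1 - A2 = H := by
        ext i j; simp [hA1, hA2]; ring
      have hsumT : A1ᵀ + A2ᵀ = Jm m := by
        rw [← Matrix.transpose_add, hsum]
        ext i j; simp [Jm]
      refine ⟨blk A1 A2, ?_, ?_, ?_, blk_mul_K _ _ hsum, K_mul_blk _ _ hsum⟩
      · rintro ⟨i, a⟩ ⟨j, b⟩
        by_cases h : a = b <;>
          simp only [blk, Matrix.of_apply, h, if_pos, if_neg, hA1, hA2] <;>
          rcases hH i j with hh | hh <;> rw [hh] <;> norm_num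
      · rw [part2 A1 A2 hsum, hdiff]
        exact hHHT
      · have hb : blk A1 A2 = (blk A1ᵀ A2ᵀ)ᵀ := by
          rw [blk_transpose, Matrix.transpose_transpose, Matrix.transpose_transpose]
        rw [blk_transpose, hb, part2 A1ᵀ A2ᵀ hsumT, ← Matrix.transpose_sub, hdiff]
        exact transpose_mul_self_eq hm0 H hHHT
  · intro A1 A2 _ _ hsum
    exact part2 A1 A2 hsum

end
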